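/- arXiv:1309.2676 — 2 statements merged into one kernel-verified Lean document; each statement's English description precedes it below -/
import Mathlib

section
/- Suppose D is a dictionary satisfying the RIP of order k with constant δ_k < 1, meaning (1−δ_k)‖α‖₂² ≤ ‖Dα‖₂² ≤ (1+δ_k)‖α‖₂² for all k-sparse α. Let v ∈ ℝ^d be arbitrary, let T̂ be the set of indices of the k largest-magnitude entries of D*v, and let T* be any index set of size at most k. Then ‖P_{T̂} v‖₂² ≥ ((1−δ_k)/(1+δ_k)) ‖P_{T*} v‖₂². -/
/-- `P_T`: orthogonal projection of `ℝ^d` onto the span of the columns of `D` indexed by `T`. -/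
noncomputable def projSpan {d n : ℕ}
    (D : EuclideanSpace ℝ (Fin n) →L[ℝ] EuclideanSpace ℝ (Fin d)) (T : Finset (Fin n)) :
    EuclideanSpace ℝ (Fin d) →L[ℝ] EuclideanSpace ℝ (Fin d) :=
  (Submodule.span ℝ ((fun i => D (EuclideanSpace.single i 1)) '' (T : Set (Fin n)))).subtypeL.comp
    (Submodule.orthogonalProjection _)

/-! Write `S_T = ∑_{i ∈ T} ⟪dᵢ, v⟫² = ‖D_T^* v‖²`. By the RIP, the columns indexed by a set of
size at most `k` form a Riesz sequence with bounds `1 ± δ`, and such a family is a frame for its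
span with the same bounds: `(1 - δ) ‖P_T v‖² ≤ S_T ≤ (1 + δ) ‖P_T v‖²`. Both inequalities are
Cauchy–Schwarz, tested against `P_T v = D_T c` and against `D_T D_T^* v` respectively. Since `T̂`
collects the `k` largest `|⟪dᵢ, v⟫|`, also `S_{T*} ≤ S_{T̂}`, whence
`(1 - δ) ‖P_{T*} v‖² ≤ S_{T*} ≤ S_{T̂} ≤ (1 + δ) ‖P_{T̂} v‖²`. -/

open Finset RealInnerProductSpace Submodule

namespace Finset

variable {ι M : Type*} [AddCommMonoid M] [LinearOrder M] [IsOrderedAddMonoid M] {s t : Finset ι}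
  {g : ι → M}

theorem sum_le_sum_of_card_le_of_forall_le (hg : ∀ j ∈ t, 0 ≤ g j) (hcard : #s ≤ #t)
    (hle : ∀ i ∈ s, ∀ j ∈ t, g i ≤ g j) : ∑ i ∈ s, g i ≤ ∑ j ∈ t, g j := by
  rcases t.eq_empty_or_nonempty with rfl | ht
  · simp [card_eq_zero.1 (Nat.le_zero.1 hcard)]
  obtain ⟨j₀, hj₀, hmin⟩ := t.exists_min_image g ht
  calc ∑ i ∈ s, g i ≤ #s • g j₀ := sum_le_card_nsmul _ _ _ fun i hi => hle i hi j₀ hj₀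
    _ ≤ #t • g j₀ := nsmul_le_nsmul_left (hg j₀ hj₀) hcard
    _ ≤ ∑ j ∈ t, g j := card_nsmul_le_sum _ _ _ hmin

theorem sum_le_sum_of_card_le_of_forall_notMem_le [DecidableEq ι] (hg : ∀ j ∈ t, 0 ≤ g j)
    (hcard : #s ≤ #t) (htop : ∀ j ∈ t, ∀ i ∉ t, g i ≤ g j) : ∑ i ∈ s, g i ≤ ∑ j ∈ t, g j := by
  rw [← sum_inter_add_sum_sdiff s t, ← sum_inter_add_sum_sdiff t s, inter_comm t s]
  refine add_le_add le_rfl (sum_le_sum_of_card_le_of_forall_le ?_ ?_ ?_)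
  · exact fun j hj => hg j (mem_sdiff.1 hj).1
  · have := card_sdiff_add_card_inter s t
    have := card_sdiff_add_card_inter t s
    rw [inter_comm] at this
    omega
  · exact fun i hi j hj => htop j (mem_sdiff.1 hj).1 i (mem_sdiff.1 hi).2

end Finset

section FrameBounds

variable {F ι : Type*} [NormedAddCommGroup F] [InnerProductSpace ℝ F] [FiniteDimensional ℝ F]
  (f : ι → F) (T : Finset ι) (v : F)

theorem inner_starProjection_span_image (c : ι → ℝ) :
    ⟪(span ℝ (f '' T)).starProjection v, ∑ i ∈ T, c i • f i⟫ = ∑ i ∈ T, c i * ⟪f i, v⟫ := by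
  have hmem : ∑ i ∈ T, c i • f i ∈ span ℝ (f '' T) :=
    (mem_span_image_finset_iff_exists_fun' ℝ).2 ⟨c, rfl⟩
  rw [inner_starProjection_left_eq_right, starProjection_eq_self_iff.2 hmem, inner_sum]
  exact sum_congr rfl fun i _ => by rw [real_inner_smul_right, real_inner_comm]

theorem le_sum_inner_sq_of_le_norm_sum_sq {A : ℝ}
    (hf : ∀ c : ι → ℝ, A * ∑ i ∈ T, c i ^ 2 ≤ ‖∑ i ∈ T, c i • f i‖ ^ 2) :
    A * ‖(span ℝ (f '' T)).starProjection v‖ ^ 2 ≤ ∑ i ∈ T, ⟪f i, v⟫ ^ 2 := by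
  obtain ⟨c, hc⟩ := (mem_span_image_finset_iff_exists_fun' ℝ).1
    ((span ℝ (f '' T)).starProjection_apply_mem v)
  set p := (span ℝ (f '' T)).starProjection v
  have hp : ‖p‖ ^ 2 = ∑ i ∈ T, c i * ⟪f i, v⟫ := by
    rw [← real_inner_self_eq_norm_sq]
    nth_rw 2 [← hc]
    exact inner_starProjection_span_image f T v c
  set S := ∑ i ∈ T, ⟪f i, v⟫ ^ 2
  set a := ∑ i ∈ T, c i ^ 2
  have hCS : (‖p‖ ^ 2) ^ 2 ≤ a * S := hp ▸ sum_mul_sq_le_sq_mul_sq T c _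
  have hAa : A * a ≤ ‖p‖ ^ 2 := hc ▸ hf c
  obtain ha | ha := (show 0 ≤ a from sum_nonneg fun i _ => sq_nonneg _).eq_or_lt
  · have hp0 : ‖p‖ ^ 2 = 0 := by rw [← ha, zero_mul] at hCS; nlinarith
    rw [hp0, mul_zero]
    exact sum_nonneg fun i _ => sq_nonneg _
  refine le_of_mul_le_mul_left ?_ ha
  calc a * (A * ‖p‖ ^ 2) = A * a * ‖p‖ ^ 2 := by ring
    _ ≤ ‖p‖ ^ 2 * ‖p‖ ^ 2 := by gcongr
    _ = (‖p‖ ^ 2) ^ 2 := (sq _).symm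
    _ ≤ a * S := hCS

theorem sum_inner_sq_le_of_norm_sum_sq_le {B : ℝ} (hB : 0 ≤ B)
    (hf : ∀ c : ι → ℝ, ‖∑ i ∈ T, c i • f i‖ ^ 2 ≤ B * ∑ i ∈ T, c i ^ 2) :
    ∑ i ∈ T, ⟪f i, v⟫ ^ 2 ≤ B * ‖(span ℝ (f '' T)).starProjection v‖ ^ 2 := by
  have hinner := inner_starProjection_span_image f T v fun i => ⟪f i, v⟫
  have hw := hf fun i => ⟪f i, v⟫
  simp only [← sq] at hinner
  set w := ∑ i ∈ T, ⟪f i, v⟫ • f i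
  set p := (span ℝ (f '' T)).starProjection v
  set S := ∑ i ∈ T, ⟪f i, v⟫ ^ 2
  obtain hS | hS := (show 0 ≤ S from sum_nonneg fun i _ => sq_nonneg _).eq_or_lt
  · rw [← hS]; positivity
  refine le_of_mul_le_mul_right ?_ hS
  calc S * S = ⟪p, w⟫ ^ 2 := by rw [hinner, sq]
    _ ≤ (‖p‖ * ‖w‖) ^ 2 := by gcongr; exacts [hinner ▸ hS.le, real_inner_le_norm p w]
    _ = ‖p‖ ^ 2 * ‖w‖ ^ 2 := by ring
    _ ≤ ‖p‖ ^ 2 * (B * S) := by gcongr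
    _ = B * ‖p‖ ^ 2 * S := by ring

end FrameBounds

section RestrictedIsometry

variable {ι E : Type*} [DecidableEq ι] [SeminormedAddCommGroup E] [NormedSpace ℝ E]

theorem EuclideanSpace.sum_smul_single_apply (T : Finset ι) (c : ι → ℝ) (j : ι) :
    (∑ i ∈ T, c i • EuclideanSpace.single i (1 : ℝ)) j = if j ∈ T then c j else 0 := by
  simp [Pi.single_apply]

variable [Fintype ι]

theorem EuclideanSpace.norm_sq_sum_smul_single (T : Finset ι) (c : ι → ℝ) :
    ‖∑ i ∈ T, c i • EuclideanSpace.single i (1 : ℝ)‖ ^ 2 = ∑ i ∈ T, c i ^ 2 := by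
  simp [EuclideanSpace.real_norm_sq_eq, EuclideanSpace.sum_smul_single_apply, ite_pow]

theorem norm_sq_sum_smul_bounds_of_sparse {k : ℕ} {A B : ℝ} (D : EuclideanSpace ℝ ι →L[ℝ] E)
    (hD : ∀ α : EuclideanSpace ℝ ι, (∃ s : Finset ι, #s ≤ k ∧ ∀ i ∉ s, α i = 0) →
      A * ‖α‖ ^ 2 ≤ ‖D α‖ ^ 2 ∧ ‖D α‖ ^ 2 ≤ B * ‖α‖ ^ 2)
    {T : Finset ι} (hT : #T ≤ k) (c : ι → ℝ) :
    A * ∑ i ∈ T, c i ^ 2 ≤ ‖∑ i ∈ T, c i • D (EuclideanSpace.single i 1)‖ ^ 2 ∧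
      ‖∑ i ∈ T, c i • D (EuclideanSpace.single i 1)‖ ^ 2 ≤ B * ∑ i ∈ T, c i ^ 2 := by
  have hsupp : ∀ j ∉ T, (∑ i ∈ T, c i • EuclideanSpace.single i (1 : ℝ)) j = 0 := fun j hj => by
    rw [EuclideanSpace.sum_smul_single_apply, if_neg hj]
  simpa only [EuclideanSpace.norm_sq_sum_smul_single, map_sum, map_smul] using hD _ ⟨T, hT, hsupp⟩

end RestrictedIsometry

theorem projSpan_eq_starProjection {d n : ℕ}
    (D : EuclideanSpace ℝ (Fin n) →L[ℝ] EuclideanSpace ℝ (Fin d)) (T : Finset (Fin n)) :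
    projSpan D T = (span ℝ ((fun i => D (EuclideanSpace.single i 1)) '' T)).starProjection :=
  rfl

theorem stmt4_general {d n k : ℕ} (δ : ℝ)
    (D : EuclideanSpace ℝ (Fin n) →L[ℝ] EuclideanSpace ℝ (Fin d))
    (hRIP : ∀ α : EuclideanSpace ℝ (Fin n),
      (∃ s : Finset (Fin n), s.card ≤ k ∧ ∀ i ∉ s, α i = 0) →
      (1 - δ) * ‖α‖ ^ 2 ≤ ‖D α‖ ^ 2 ∧ ‖D α‖ ^ 2 ≤ (1 + δ) * ‖α‖ ^ 2)
    (v : EuclideanSpace ℝ (Fin d))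
    (That Tstar : Finset (Fin n)) (hThat : That.card = k)
    (hlargest : ∀ i ∈ That, ∀ j ∉ That,
      |(inner ℝ (D (EuclideanSpace.single j 1)) v : ℝ)| ≤
        |(inner ℝ (D (EuclideanSpace.single i 1)) v : ℝ)|)
    (hTstar : Tstar.card ≤ k) :
    ((1 - δ) / (1 + δ)) * ‖projSpan D Tstar v‖ ^ 2 ≤ ‖projSpan D That v‖ ^ 2 := by
  -- when `1 + δ ≤ 0` the factor `(1 - δ) / (1 + δ)` is nonpositive (`x / 0 = 0` included)
  obtain hneg | hpos := le_or_gt (1 + δ) 0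
  · have : (1 - δ) / (1 + δ) ≤ 0 := div_nonpos_of_nonneg_of_nonpos (by linarith) hneg
    exact (mul_nonpos_of_nonpos_of_nonneg this (sq_nonneg _)).trans (sq_nonneg _)
  set f := fun i => D (EuclideanSpace.single i 1)
  have hlower := le_sum_inner_sq_of_le_norm_sum_sq f Tstar v fun c =>
    (norm_sq_sum_smul_bounds_of_sparse D hRIP hTstar c).1
  have hupper := sum_inner_sq_le_of_norm_sum_sq_le f That v hpos.le fun c =>
    (norm_sq_sum_smul_bounds_of_sparse D hRIP hThat.le c).2
  have htop : ∑ i ∈ Tstar, ⟪f i, v⟫ ^ 2 ≤ ∑ i ∈ That, ⟪f i, v⟫ ^ 2 :=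
    sum_le_sum_of_card_le_of_forall_notMem_le (fun _ _ => sq_nonneg _) (hThat ▸ hTstar)
      fun j hj i hi => sq_le_sq.2 (hlargest j hj i hi)
  rw [projSpan_eq_starProjection, projSpan_eq_starProjection, div_mul_eq_mul_div,
    div_le_iff₀ hpos]
  linarith

/-- If the dictionary `D` satisfies the RIP of order `k` with constant `δ_k < 1`, `v` is
arbitrary, `T̂` consists of indices of the `k` largest-magnitude entries of `D*v`
(the entries of `D*v` are `⟨dᵢ, v⟩`), and `T*` is any set of size at most `k`, then
`‖P_{T̂} v‖² ≥ ((1−δ_k)/(1+δ_k)) ‖P_{T*} v‖²`. -/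
theorem stmt4 {d n k : ℕ} (δ : ℝ) (hδ : δ < 1)
    (D : EuclideanSpace ℝ (Fin n) →L[ℝ] EuclideanSpace ℝ (Fin d))
    (hRIP : ∀ α : EuclideanSpace ℝ (Fin n),
      (∃ s : Finset (Fin n), s.card ≤ k ∧ ∀ i ∉ s, α i = 0) →
      (1 - δ) * ‖α‖ ^ 2 ≤ ‖D α‖ ^ 2 ∧ ‖D α‖ ^ 2 ≤ (1 + δ) * ‖α‖ ^ 2)
    (v : EuclideanSpace ℝ (Fin d))
    (That Tstar : Finset (Fin n)) (hThat : That.card = k)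
    (hlargest : ∀ i ∈ That, ∀ j ∉ That,
      |(inner ℝ (D (EuclideanSpace.single j 1)) v : ℝ)| ≤
        |(inner ℝ (D (EuclideanSpace.single i 1)) v : ℝ)|)
    (hTstar : Tstar.card ≤ k) :
    ((1 - δ) / (1 + δ)) * ‖projSpan D Tstar v‖ ^ 2 ≤ ‖projSpan D That v‖ ^ 2 :=
  stmt4_general δ D hRIP v That Tstar hThat hlargest hTstar
end

section
/- Let P and Q = I − P be complementary orthogonal projections on ℝ^d, M ∈ ℝ^{m×d} with ‖P(I − M*M)P'‖ ≤ δ for all relevant projection pairs P, P' of bounded support size, and ‖MP‖² ≤ 1+δ'. Then for any vectors u, e and constants γ > 0, α > 0: ‖P M*(Mu + e)‖₂² ≤ ((1+γ)/γ)(1+δ')‖e‖₂² + (1+α)(1+γ)(‖u‖₂² − ‖Qu‖₂²) + (1 + 1/α)(1+γ)δ²‖u‖₂². -/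
/-!
Write `P M*(Mu + e) = (Pu - P(I - M*M)u) + P M*e`. Pythagoras for the orthogonal projection `P`
gives `‖Pu‖² = ‖u‖² - ‖u - Pu‖²`, the hypothesis bounds `‖P(I - M*M)u‖` by `δ‖u‖`, and
`‖P M*‖ = ‖(MP)*‖ = ‖MP‖` bounds the noise term. The weighted triangle inequality
`‖a + b‖² ≤ (1 + c)‖a‖² + (1 + 1/c)‖b‖²` combines these, with `c = α` inside the first summand
and `c = γ` between the two summands.
-/

open ContinuousLinearMap

lemma norm_add_sq_le_of_pos {E : Type*} [SeminormedAddCommGroup E] (a b : E) {c : ℝ}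
    (hc : 0 < c) : ‖a + b‖ ^ 2 ≤ (1 + c) * ‖a‖ ^ 2 + (1 + 1 / c) * ‖b‖ ^ 2 := by
  have hgap : (1 + c) * ‖a‖ ^ 2 + (1 + 1 / c) * ‖b‖ ^ 2 - (‖a‖ + ‖b‖) ^ 2 =
      (c * ‖a‖ - ‖b‖) ^ 2 / c := by
    field_simp
    ring
  calc ‖a + b‖ ^ 2 ≤ (‖a‖ + ‖b‖) ^ 2 := by gcongr; exact norm_add_le a b
    _ ≤ (1 + c) * ‖a‖ ^ 2 + (1 + 1 / c) * ‖b‖ ^ 2 := by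
      have : 0 ≤ (c * ‖a‖ - ‖b‖) ^ 2 / c := by positivity
      linarith

section Projection

variable {E F : Type*} [NormedAddCommGroup E] [InnerProductSpace ℝ E]
  [NormedAddCommGroup F] [InnerProductSpace ℝ F]

lemma norm_sq_apply_of_isSymmetric_of_idempotent {P : E →L[ℝ] E}
    (hsa : (P : E →ₗ[ℝ] E).IsSymmetric) (hidem : ∀ z, P (P z) = P z) (u : E) :
    ‖P u‖ ^ 2 = ‖u‖ ^ 2 - ‖u - P u‖ ^ 2 := by
  have horth : inner ℝ (P u) (u - P u) = 0 :=
    calc inner ℝ (P u) (u - P u) = inner ℝ u (P (u - P u)) := hsa u _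
      _ = 0 := by rw [map_sub, hidem, sub_self, inner_zero_right]
  have hpyth := norm_add_sq_eq_norm_sq_add_norm_sq_real horth
  rw [add_sub_cancel] at hpyth
  linarith

variable [CompleteSpace E] [CompleteSpace F]

lemma norm_apply_adjoint_apply_le_of_isSymmetric {P : E →L[ℝ] E}
    (hsa : (P : E →ₗ[ℝ] E).IsSymmetric) (M : E →L[ℝ] F) (e : F) :
    ‖P (adjoint M e)‖ ≤ ‖M ∘L P‖ * ‖e‖ := by
  have hPadj : adjoint P = P := (eq_adjoint_iff P P).mpr hsa |>.symm
  calc ‖P (adjoint M e)‖ = ‖adjoint (M ∘L P) e‖ := by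
        rw [adjoint_comp, hPadj, comp_apply]
    _ ≤ ‖adjoint (M ∘L P)‖ * ‖e‖ := le_opNorm _ _
    _ = ‖M ∘L P‖ * ‖e‖ := by rw [LinearIsometryEquiv.norm_map]

end Projection

/-- Key estimate of Lemma (SSCoSaMP_Pxp_bound): let `P` be an orthogonal projection on `ℝ^d`
(idempotent and self-adjoint), `Q = I − P`, and `M : ℝ^d → ℝ^m` with `‖M P‖² ≤ 1 + δ'` and
`‖P((I − M*M)u)‖ ≤ δ‖u‖`.  Then for any `e` and constants `γ, α > 0`:
`‖P M*(Mu + e)‖² ≤ ((1+γ)/γ)(1+δ')‖e‖² + (1+α)(1+γ)(‖u‖² − ‖Qu‖²) + (1+1/α)(1+γ)δ²‖u‖²`. -/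
theorem stmt16 {d m : ℕ} (δ δ' γ α : ℝ) (hγ : 0 < γ) (hα : 0 < α)
    (P : EuclideanSpace ℝ (Fin d) →L[ℝ] EuclideanSpace ℝ (Fin d))
    (M : EuclideanSpace ℝ (Fin d) →L[ℝ] EuclideanSpace ℝ (Fin m))
    (hidem : ∀ z, P (P z) = P z)
    (hsa : ∀ z w : EuclideanSpace ℝ (Fin d), (inner ℝ (P z) w : ℝ) = (inner ℝ z (P w) : ℝ))
    (hMP : ‖M ∘L P‖ ^ 2 ≤ 1 + δ')
    (u : EuclideanSpace ℝ (Fin d)) (e : EuclideanSpace ℝ (Fin m))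
    (hδu : ‖P ((ContinuousLinearMap.id ℝ (EuclideanSpace ℝ (Fin d)) -
        ContinuousLinearMap.adjoint M ∘L M) u)‖ ≤ δ * ‖u‖) :
    ‖P (ContinuousLinearMap.adjoint M (M u + e))‖ ^ 2 ≤
      ((1 + γ) / γ) * (1 + δ') * ‖e‖ ^ 2 +
        (1 + α) * (1 + γ) * (‖u‖ ^ 2 - ‖u - P u‖ ^ 2) +
        (1 + 1 / α) * (1 + γ) * δ ^ 2 * ‖u‖ ^ 2 := by
  set r := P ((ContinuousLinearMap.id ℝ (EuclideanSpace ℝ (Fin d)) - adjoint M ∘L M) u)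
  have hsplit : P (adjoint M (M u + e)) = (P u + -r) + P (adjoint M e) := by
    simp only [r, map_add, sub_apply, map_sub, id_apply, comp_apply]
    abel
  have hPu : ‖P u‖ ^ 2 = ‖u‖ ^ 2 - ‖u - P u‖ ^ 2 :=
    norm_sq_apply_of_isSymmetric_of_idempotent hsa hidem u
  have hr : ‖r‖ ^ 2 ≤ δ ^ 2 * ‖u‖ ^ 2 := by
    rw [← mul_pow]; gcongr
  have hnoise : ‖P (adjoint M e)‖ ^ 2 ≤ (1 + δ') * ‖e‖ ^ 2 := by
    calc ‖P (adjoint M e)‖ ^ 2 ≤ (‖M ∘L P‖ * ‖e‖) ^ 2 := by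
          gcongr; exact norm_apply_adjoint_apply_le_of_isSymmetric hsa M e
      _ ≤ (1 + δ') * ‖e‖ ^ 2 := by rw [mul_pow]; gcongr
  have hsignal : ‖P u + -r‖ ^ 2 ≤
      (1 + α) * (‖u‖ ^ 2 - ‖u - P u‖ ^ 2) + (1 + 1 / α) * (δ ^ 2 * ‖u‖ ^ 2) := by
    calc ‖P u + -r‖ ^ 2 ≤ (1 + α) * ‖P u‖ ^ 2 + (1 + 1 / α) * ‖-r‖ ^ 2 :=
          norm_add_sq_le_of_pos _ _ hα
      _ ≤ _ := by rw [norm_neg, hPu]; gcongr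
  rw [hsplit]
  calc _ ≤ (1 + γ) * ‖P u + -r‖ ^ 2 + (1 + 1 / γ) * ‖P (adjoint M e)‖ ^ 2 :=
        norm_add_sq_le_of_pos _ _ hγ
    _ ≤ (1 + γ) * ((1 + α) * (‖u‖ ^ 2 - ‖u - P u‖ ^ 2) + (1 + 1 / α) * (δ ^ 2 * ‖u‖ ^ 2))
        + (1 + 1 / γ) * ((1 + δ') * ‖e‖ ^ 2) := by gcongr
    _ = _ := by field_simp; ring
end
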